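/- Let μ̃ be the bilinear skew-symmetric map on ℝ^7 with nonzero basis brackets [e1,e2]=(√114/38)e3+(√57/38)e4, [e1,e3]=(√190/38)e6, [e1,e4]=(√19/19)e5, [e1,e6]=(√114/38)e7, [e2,e3]=(√57/38)e7, [e2,e4]=(√114/38)e7. Then μ̃ satisfies the Jacobi identity, D = diag(1,2,3,3,4,4,5) is a derivation of (ℝ^7,μ̃), and m(μ̃) = -(20/19)·Id + (11/38)·D; in particular m(μ̃) = diag(-29/38,-9/19,-7/38,-7/38,2/19,2/19,15/38). -/

import Mathlib

open Finset

noncomputable section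

/-- `ℝ⁷` with its standard basis and standard inner product. -/
abbrev V7 : Type := Fin 7 → ℝ

/-- The standard basis vector `e i`. -/
def e (i : Fin 7) : V7 := Pi.single i 1

/-- The standard inner product on `ℝ⁷`. -/
def dot (x y : V7) : ℝ := ∑ i, x i * y i

/-- Structure constants built from a list of entries `(i, j, k, a)`, each meaning that
`μ (e i) (e j)` has component `a` along `e k` (and `μ (e j) (e i)` has component `-a`);
all unlisted basis brackets are `0`. -/
def toC (L : List (Fin 7 × Fin 7 × Fin 7 × ℝ)) (i j k : Fin 7) : ℝ :=
  (L.map fun t =>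
      (if t.1 = i ∧ t.2.1 = j ∧ t.2.2.1 = k then t.2.2.2 else 0)
    - (if t.1 = j ∧ t.2.1 = i ∧ t.2.2.1 = k then t.2.2.2 else 0)).sum

/-- The bilinear skew-symmetric map on `ℝ⁷` with structure constants `c`. -/
def br (c : Fin 7 → Fin 7 → Fin 7 → ℝ) (x y : V7) : V7 :=
  fun k => ∑ i, ∑ j, x i * y j * c i j k

lemma br_add_left (c : Fin 7 → Fin 7 → Fin 7 → ℝ) (x x' y : V7) :
    br c (x + x') y = br c x y + br c x' y := by
  funext k
  simp only [br, Pi.add_apply, ← Finset.sum_add_distrib]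
  exact Finset.sum_congr rfl fun i _ => Finset.sum_congr rfl fun j _ => by ring

lemma br_smul_left (c : Fin 7 → Fin 7 → Fin 7 → ℝ) (r : ℝ) (x y : V7) :
    br c (r • x) y = r • br c x y := by
  funext k
  simp only [br, Pi.smul_apply, smul_eq_mul, Finset.mul_sum]
  exact Finset.sum_congr rfl fun i _ => Finset.sum_congr rfl fun j _ => by ring

lemma br_add_right (c : Fin 7 → Fin 7 → Fin 7 → ℝ) (x y y' : V7) :
    br c x (y + y') = br c x y + br c x y' := by
  funext k
  simp only [br, Pi.add_apply, ← Finset.sum_add_distrib]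
  exact Finset.sum_congr rfl fun i _ => Finset.sum_congr rfl fun j _ => by ring

lemma br_smul_right (c : Fin 7 → Fin 7 → Fin 7 → ℝ) (r : ℝ) (x y : V7) :
    br c x (r • y) = r • br c x y := by
  funext k
  simp only [br, Pi.smul_apply, smul_eq_mul, Finset.mul_sum]
  exact Finset.sum_congr rfl fun i _ => Finset.sum_congr rfl fun j _ => by ring

lemma br_zero_left (c : Fin 7 → Fin 7 → Fin 7 → ℝ) (y : V7) : br c 0 y = 0 := by
  funext k; simp [br]

lemma br_zero_right (c : Fin 7 → Fin 7 → Fin 7 → ℝ) (x : V7) : br c x 0 = 0 := by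
  funext k; simp [br]

/-- The space of derivations of the algebra `(ℝ⁷, br c)`, i.e. the linear maps `D` with
`D (μ x y) = μ (D x) y + μ x (D y)` for all `x, y`, as a submodule of the endomorphisms. -/
def derivations (c : Fin 7 → Fin 7 → Fin 7 → ℝ) : Submodule ℝ (Module.End ℝ V7) where
  carrier := {D | ∀ x y, D (br c x y) = br c (D x) y + br c x (D y)}
  add_mem' := by
    intro D E hD hE x y
    simp only [LinearMap.add_apply, hD x y, hE x y, br_add_left, br_add_right]
    abel
  zero_mem' := by
    intro x y
    simp [br_zero_left, br_zero_right]
  smul_mem' := by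
    intro r D hD x y
    simp only [LinearMap.smul_apply, hD x y, smul_add, br_smul_left, br_smul_right]

/-- The Jacobi identity for the bracket `br c`. -/
def Jacobi (c : Fin 7 → Fin 7 → Fin 7 → ℝ) : Prop :=
  ∀ x y z : V7, br c (br c x y) z + br c (br c y z) x + br c (br c z x) y = 0

/-- Skew-symmetry of the bracket `br c`. -/
def Skew (c : Fin 7 → Fin 7 → Fin 7 → ℝ) : Prop :=
  ∀ x y : V7, br c x y = - br c y x

/-- The diagonal endomorphism `diag (a 1, …, a 7)` of `ℝ⁷`, `e i ↦ a i • e i`. -/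
def diagL (a : Fin 7 → ℝ) : Module.End ℝ V7 :=
  LinearMap.pi fun i => a i • LinearMap.proj i

/-- Structure constants of the bracket `μ̃`. -/
def c15 : Fin 7 → Fin 7 → Fin 7 → ℝ :=
  toC [(0, 1, 2, Real.sqrt 114 / 38),
   (0, 1, 3, Real.sqrt 57 / 38),
   (0, 2, 5, Real.sqrt 190 / 38),
   (0, 3, 4, Real.sqrt 19 / 19),
   (0, 5, 6, Real.sqrt 114 / 38),
   (1, 2, 6, Real.sqrt 57 / 38),
   (1, 3, 6, Real.sqrt 114 / 38)]

/-!
Everything reduces to the structure constants `c i j k`. The bracket is graded by the weights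
`w = (1, 2, 3, 3, 4, 4, 5)`: `[e i, e j]` only has components along `e k` with `w k = w i + w j`,
which is exactly the statement that `D = diag w` is a derivation. The Jacobi identity then costs
nothing: a term `c p q i * c i r k` of the Jacobiator can only be nonzero if
`w k = w p + w q + w r`, while three distinct basis vectors have total weight at least `6 > 5`,
and the Jacobiator of a skew bracket vanishes when two indices coincide. Finally
`m(μ̃) e_p` has coordinates `-2 ∑ c p i j * c k i j + ∑ c i j p * c i j k`, a finite computation
in which the radicals only occur squared or cancel.
-/

section StructureConstants

variable (c : Fin 7 → Fin 7 → Fin 7 → ℝ)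

lemma dot_e (x : V7) (k : Fin 7) : dot x (e k) = x k := by
  simp [dot, e, Pi.single_apply]

lemma br_e_e_apply (a b k : Fin 7) : br c (e a) (e b) k = c a b k := by
  simp [br, e, Pi.single_apply]

lemma diagL_apply (a : Fin 7 → ℝ) (x : V7) (k : Fin 7) : diagL a x k = a k * x k := by
  simp [diagL]

lemma smul_one_add_smul_diagL (s t : ℝ) (a : Fin 7 → ℝ) :
    s • (1 : Module.End ℝ V7) + t • diagL a = diagL fun i => s + t * a i := by
  refine LinearMap.ext fun x => funext fun k => ?_
  simp only [LinearMap.add_apply, LinearMap.smul_apply, Module.End.one_apply, Pi.add_apply,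
    Pi.smul_apply, smul_eq_mul, diagL_apply]
  ring

lemma ext_e {f g : Module.End ℝ V7} (h : ∀ p, f (e p) = g (e p)) : f = g :=
  (Pi.basisFun ℝ (Fin 7)).ext fun p => by simpa [e] using h p

lemma skew_of_antisymm (hc : ∀ i j k, c j i k = -c i j k) : Skew c := by
  intro x y
  funext k
  simp only [br, Pi.neg_apply, ← sum_neg_distrib]
  rw [sum_comm]
  refine sum_congr rfl fun j _ => sum_congr rfl fun i _ => ?_
  rw [hc j i k]
  ring

def IsGradedBy (w : Fin 7 → ℝ) : Prop :=
  ∀ i j k, w k * c i j k = (w i + w j) * c i j k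

lemma diagL_mem_derivations {w : Fin 7 → ℝ} (hw : IsGradedBy c w) :
    diagL w ∈ derivations c := by
  intro x y
  funext k
  simp only [Pi.add_apply, diagL_apply, br, mul_sum, ← sum_add_distrib]
  refine sum_congr rfl fun i _ => sum_congr rfl fun j _ => ?_
  linear_combination x i * y j * hw i j k

lemma moment_apply_e (m : Module.End ℝ V7)
    (hm : ∀ x y : V7, dot (m x) y =
      -2 * ∑ i, ∑ j, dot (br c x (e i)) (e j) * dot (br c y (e i)) (e j)
      + ∑ i, ∑ j, dot (br c (e i) (e j)) x * dot (br c (e i) (e j)) y) (p k : Fin 7) :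
    m (e p) k = -2 * ∑ i, ∑ j, c p i j * c k i j + ∑ i, ∑ j, c i j p * c i j k := by
  simpa only [dot_e, br_e_e_apply] using hm (e p) (e k)

end StructureConstants

lemma toC_swap (L : List (Fin 7 × Fin 7 × Fin 7 × ℝ)) (i j k : Fin 7) :
    toC L j i k = -toC L i j k := by
  induction L with
  | nil => simp [toC]
  | cons t M ih =>
    simp only [toC, List.map_cons, List.sum_cons] at ih ⊢
    linear_combination ih

lemma toC_isGradedBy (w : Fin 7 → ℝ) (L : List (Fin 7 × Fin 7 × Fin 7 × ℝ))
    (hL : ∀ t ∈ L, w t.2.2.1 = w t.1 + w t.2.1) : IsGradedBy (toC L) w := by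
  intro i j k
  simp only [toC]
  rw [← List.sum_map_mul_left, ← List.sum_map_mul_left]
  congr 1
  refine List.map_congr_left fun ⟨p, q, r, v⟩ ht => ?_
  have hw := hL _ ht
  dsimp only at hw ⊢
  split_ifs <;> grind

section Jacobiator

variable (c : Fin 7 → Fin 7 → Fin 7 → ℝ)

def jacobiator (p q r k : Fin 7) : ℝ :=
  ∑ i, (c p q i * c i r k + c q r i * c i p k + c r p i * c i q k)

lemma br_br_apply (x y z : V7) (k : Fin 7) :
    br c (br c x y) z k = ∑ p, ∑ q, ∑ r, x p * y q * z r * ∑ i, c p q i * c i r k := by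
  simp only [br, sum_mul, mul_sum]
  refine (sum_congr rfl fun i _ => sum_comm_cycle.symm).trans <| sum_comm_cycle.symm.trans <|
    sum_congr rfl fun p _ => sum_congr rfl fun q _ => sum_comm.trans <|
      sum_congr rfl fun r _ => sum_congr rfl fun i _ => ?_
  ring

lemma jacobi_of_jacobiator_eq_zero (h : ∀ p q r k, jacobiator c p q r k = 0) : Jacobi c := by
  intro x y z
  funext k
  simp only [Pi.add_apply, Pi.zero_apply, br_br_apply]
  rw [sum_comm_cycle (f := fun p q r => y p * z q * x r * ∑ i, c p q i * c i r k),
    ← sum_comm_cycle (f := fun q r p => z p * x q * y r * ∑ i, c p q i * c i r k)]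
  simp only [← sum_add_distrib]
  refine sum_eq_zero fun p _ => sum_eq_zero fun q _ => sum_eq_zero fun r _ => ?_
  have hpqr := h p q r k
  simp only [jacobiator, sum_add_distrib] at hpqr
  linear_combination x p * y q * z r * hpqr

variable {c}

lemma jacobiator_cycle (p q r k : Fin 7) : jacobiator c p q r k = jacobiator c q r p k :=
  sum_congr rfl fun _ _ => by ring

lemma jacobiator_swap (hc : ∀ i j k, c j i k = -c i j k) (p q r k : Fin 7) :
    jacobiator c q p r k = -jacobiator c p q r k := by
  simp only [jacobiator, ← sum_neg_distrib]
  refine sum_congr rfl fun i _ => ?_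
  rw [hc q p, hc p r, hc r q]
  ring

lemma jacobiator_self_left (hc : ∀ i j k, c j i k = -c i j k) (p r k : Fin 7) :
    jacobiator c p p r k = 0 := by
  linarith [jacobiator_swap hc p p r k]

lemma jacobiator_eq_zero_of_weight_ne {w : Fin 7 → ℝ} (hw : IsGradedBy c w) {p q r k : Fin 7}
    (hk : w p + w q + w r ≠ w k) : jacobiator c p q r k = 0 := by
  have term_eq_zero : ∀ a b d i, w a + w b + w d ≠ w k → c a b i * c i d k = 0 := by
    intro a b d i hne
    by_contra hprod
    obtain ⟨hab, hik⟩ := mul_ne_zero_iff.mp hprod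
    have hi := mul_right_cancel₀ hab (hw a b i)
    have hk' := mul_right_cancel₀ hik (hw i d k)
    exact hne (by linarith)
  refine sum_eq_zero fun i _ => ?_
  rw [term_eq_zero p q r i hk, term_eq_zero q r p i (by convert hk using 1; ring),
    term_eq_zero r p q i (by convert hk using 1; ring)]
  ring

lemma jacobi_of_isGradedBy {w : Fin 7 → ℝ} (hc : ∀ i j k, c j i k = -c i j k)
    (hw : IsGradedBy c w)
    (hdistinct : ∀ p q r k, p ≠ q → q ≠ r → p ≠ r → w p + w q + w r ≠ w k) : Jacobi c := by
  refine jacobi_of_jacobiator_eq_zero c fun p q r k => ?_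
  by_cases hpq : p = q
  · rw [hpq, jacobiator_self_left hc]
  by_cases hqr : q = r
  · rw [jacobiator_cycle, hqr, jacobiator_self_left hc]
  by_cases hpr : p = r
  · rw [jacobiator_cycle, jacobiator_cycle, hpr, jacobiator_self_left hc]
  exact jacobiator_eq_zero_of_weight_ne hw (hdistinct p q r k hpq hqr hpr)

end Jacobiator

local notation "wt" => (![1, 2, 3, 3, 4, 4, 5] : Fin 7 → ℝ)

lemma c15_antisymm (i j k : Fin 7) : c15 j i k = -c15 i j k :=
  toC_swap _ i j k

lemma c15_isGradedBy : IsGradedBy c15 wt :=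
  toC_isGradedBy _ _ fun t ht => by fin_cases ht <;> simp [Matrix.cons_val] <;> norm_num

lemma wt_add_ne_of_distinct (p q r k : Fin 7) (hpq : p ≠ q) (hqr : q ≠ r) (hpr : p ≠ r) :
    wt p + wt q + wt r ≠ wt k := by
  have hk : wt k ≤ 5 := by fin_cases k <;> norm_num
  have hsum : 6 ≤ wt p + wt q + wt r := by
    fin_cases p <;> fin_cases q <;> fin_cases r <;> simp at hpq hqr hpr ⊢ <;> norm_num
  linarith

lemma c15_moment_entry (p k : Fin 7) :
    -2 * ∑ i, ∑ j, c15 p i j * c15 k i j + ∑ i, ∑ j, c15 i j p * c15 i j k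
      = diagL ![-29/38, -9/19, -7/38, -7/38, 2/19, 2/19, 15/38] (e p) k := by
  have h114 : Real.sqrt 114 ^ 2 = 114 := Real.sq_sqrt (by norm_num)
  have h57 : Real.sqrt 57 ^ 2 = 57 := Real.sq_sqrt (by norm_num)
  have h190 : Real.sqrt 190 ^ 2 = 190 := Real.sq_sqrt (by norm_num)
  have h19 : Real.sqrt 19 ^ 2 = 19 := Real.sq_sqrt (by norm_num)
  rw [diagL_apply]
  fin_cases p <;> fin_cases k <;>
    simp +decide [c15, toC, e, Fin.sum_univ_seven] <;> ring_nf <;>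
    simp only [h114, h57, h190, h19] <;> norm_num

/-- The bracket satisfies the Jacobi identity (and is skew-symmetric),
`D` is a derivation of it, and the unnormalized moment map `m(μ̃)` — i.e. the endomorphism
`m` of `ℝ⁷` determined by
`⟨m x, y⟩ = -2 ∑ᵢⱼ ⟨μ̃(x,eᵢ),eⱼ⟩⟨μ̃(y,eᵢ),eⱼ⟩ + ∑ᵢⱼ ⟨μ̃(eᵢ,eⱼ),x⟩⟨μ̃(eᵢ,eⱼ),y⟩` —
equals `-(20/19) • Id + 11/38 • D`, which is the indicated diagonal map. -/
theorem stmt :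
    Skew c15 ∧ Jacobi c15 ∧
    diagL ![1, 2, 3, 3, 4, 4, 5] ∈ derivations c15 ∧
    ∀ m : Module.End ℝ V7,
      (∀ x y : V7, dot (m x) y =
          -2 * ∑ i, ∑ j, dot (br c15 x (e i)) (e j) * dot (br c15 y (e i)) (e j)
          + ∑ i, ∑ j, dot (br c15 (e i) (e j)) x * dot (br c15 (e i) (e j)) y) →
      m = (-(20/19) : ℝ) • (1 : Module.End ℝ V7) + (11/38 : ℝ) • diagL ![1, 2, 3, 3, 4, 4, 5]
      ∧ m = diagL ![-29/38, -9/19, -7/38, -7/38, 2/19, 2/19, 15/38] := by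
  refine ⟨skew_of_antisymm _ c15_antisymm,
    jacobi_of_isGradedBy c15_antisymm c15_isGradedBy wt_add_ne_of_distinct,
    diagL_mem_derivations _ c15_isGradedBy, fun m hm => ?_⟩
  have hdiag : m = diagL ![-29/38, -9/19, -7/38, -7/38, 2/19, 2/19, 15/38] :=
    ext_e fun p => funext fun k => by
      rw [moment_apply_e c15 m hm, c15_moment_entry]
  refine ⟨?_, hdiag⟩
  rw [hdiag, smul_one_add_smul_diagL]
  congr 1
  funext i
  fin_cases i <;> norm_num
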